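/- arXiv:2411.14566 — 6 statements merged into one kernel-verified Lean document; each statement's English description precedes it below -/
import Mathlib

section
/- Let χ be an edge colouring of the complete bipartite graph K_{2,4} with parts X (|X|=2) and Y (|Y|=4) that is not proper (some vertex is incident to two edges of the same colour). If χ admits no lexicographic copy of C_4 with respect to any vertex ordering, then χ admits a monochromatic copy of C_4. -/
def NoLex (χ : Fin 2 → Fin 4 → ℕ) : Prop :=
  ∀ (x₀ x₁ : Fin 2) (y₀ y₁ : Fin 4), x₀ ≠ x₁ → y₀ ≠ y₁ →
      ∀ σ : Equiv.Perm (Fin 4),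
        ¬ ∃ φ : Fin 4 → ℕ, Function.Injective φ ∧
          ∀ i : Fin 4, (![χ x₀ y₀, χ x₁ y₀, χ x₁ y₁, χ x₀ y₁]) i =
            φ (if σ i < σ (i + 1) then i else i + 1)

-- key0 : if the two edges at x₀ share a colour, one of x₁'s edges shares it
lemma key0 (χ : Fin 2 → Fin 4 → ℕ) (hnolex : NoLex χ)
    (x₀ x₁ : Fin 2) (y₀ y₁ : Fin 4) (hx : x₀ ≠ x₁) (hy : y₀ ≠ y₁)
    (h03 : χ x₀ y₀ = χ x₀ y₁) :
    χ x₁ y₀ = χ x₀ y₀ ∨ χ x₁ y₁ = χ x₀ y₀ := by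
  by_contra h
  push_neg at h
  obtain ⟨h1, h2⟩ := h
  set a := χ x₀ y₀ with ha
  set p := χ x₁ y₀ with hp
  set q := χ x₁ y₁ with hq
  by_cases hpq : p = q
  · -- ranks 0↦0, 2↦1, 1↦2, 3↦3
    refine hnolex x₀ x₁ y₀ y₁ hx hy ⟨![0,2,1,3], ![0,2,1,3], by decide, by decide⟩
      ⟨![a, a+p+1, p, a+p+2], ?_, ?_⟩
    · intro i j hij
      fin_cases i <;> fin_cases j <;> simp at hij ⊢ <;> omega
    · intro i
      fin_cases i
      · rfl
      · rfl
      · exact hpq.symm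
      · exact h03.symm
  · -- ranks 0↦0, 1↦1, 3↦2, 2↦3
    refine hnolex x₀ x₁ y₀ y₁ hx hy ⟨![0,1,3,2], ![0,1,3,2], by decide, by decide⟩
      ⟨![a, p, a+p+q+1, q], ?_, ?_⟩
    · intro i j hij
      fin_cases i <;> fin_cases j <;> simp at hij ⊢ <;> omega
    · intro i
      fin_cases i
      · rfl
      · rfl
      · rfl
      · exact h03.symm

-- key1 : if the two edges at y₀ share a colour, one of y₁'s edges shares it
lemma key1 (χ : Fin 2 → Fin 4 → ℕ) (hnolex : NoLex χ)
    (x₀ x₁ : Fin 2) (y₀ y₁ : Fin 4) (hx : x₀ ≠ x₁) (hy : y₀ ≠ y₁)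
    (h01 : χ x₀ y₀ = χ x₁ y₀) :
    χ x₁ y₁ = χ x₀ y₀ ∨ χ x₀ y₁ = χ x₀ y₀ := by
  by_contra h
  push_neg at h
  obtain ⟨h1, h2⟩ := h
  set a := χ x₀ y₀ with ha
  set p := χ x₁ y₁ with hp
  set q := χ x₀ y₁ with hq
  by_cases hpq : p = q
  · -- ranks 1↦0, 3↦1, 0↦2, 2↦3 : toFun ![2,0,3,1], inv ![1,3,0,2]
    refine hnolex x₀ x₁ y₀ y₁ hx hy ⟨![2,0,3,1], ![1,3,0,2], by decide, by decide⟩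
      ⟨![a+p+1, a, a+p+2, p], ?_, ?_⟩
    · intro i j hij
      fin_cases i <;> fin_cases j <;> simp at hij ⊢ <;> omega
    · intro i
      fin_cases i
      · rfl
      · exact h01.symm
      · rfl
      · exact hpq.symm
  · -- ranks 1↦0, 0↦1, 2↦2, 3↦3 : toFun ![1,0,2,3]
    refine hnolex x₀ x₁ y₀ y₁ hx hy ⟨![1,0,2,3], ![1,0,2,3], by decide, by decide⟩
      ⟨![q, a, p, a+p+q+1], ?_, ?_⟩
    · intro i j hij
      fin_cases i <;> fin_cases j <;> simp at hij ⊢ <;> omega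
    · intro i
      fin_cases i
      · rfl
      · exact h01.symm
      · rfl
      · rfl

lemma pigeon4 (b : Fin 4 → Bool) (y₀ : Fin 4) :
    ∃ y₁ y₂, y₁ ≠ y₀ ∧ y₂ ≠ y₀ ∧ y₁ ≠ y₂ ∧ b y₁ = b y₂ := by
  revert b y₀; decide

-- main case: a cherry at some y₀
lemma caseB (χ : Fin 2 → Fin 4 → ℕ) (hnolex : NoLex χ)
    (x x' : Fin 2) (hx : x ≠ x') (y₀ : Fin 4) (hc : χ x y₀ = χ x' y₀) :
    ∃ (x₀ x₁ : Fin 2) (y₀ y₁ : Fin 4), x₀ ≠ x₁ ∧ y₀ ≠ y₁ ∧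
      χ x₀ y₀ = χ x₁ y₀ ∧ χ x₀ y₀ = χ x₁ y₁ ∧ χ x₀ y₀ = χ x₀ y₁ := by
  set c := χ x y₀ with hcdef
  by_cases hmono : ∃ y : Fin 4, y ≠ y₀ ∧ χ x' y = c ∧ χ x y = c
  · obtain ⟨y, hy, h1, h2⟩ := hmono
    exact ⟨x, x', y₀, y, hx, (Ne.symm hy), hc, h1.symm, h2.symm⟩
  · push_neg at hmono
    -- for each y ≠ y₀, exactly one of χ x y, χ x' y equals c
    have hone : ∀ y : Fin 4, y ≠ y₀ → (χ x y = c ∧ χ x' y ≠ c) ∨ (χ x' y = c ∧ χ x y ≠ c) := by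
      intro y hy
      have := key1 χ hnolex x x' y₀ y hx (Ne.symm hy) hc
      rcases this with h | h
      · right
        exact ⟨h, fun hxy => (hmono y hy h) hxy⟩
      · left
        refine ⟨h, fun hx'y => (hmono y hy hx'y) h⟩
    obtain ⟨y₁, y₂, hy₁, hy₂, hy12, hb⟩ := pigeon4 (fun y => decide (χ x y = c)) y₀
    simp only [decide_eq_decide] at hb
    rcases hone y₁ hy₁ with ⟨e1, n1⟩ | ⟨e1, n1⟩
    · have e2 : χ x y₂ = c := hb.mp e1
      have n2 : χ x' y₂ ≠ c := ((hone y₂ hy₂).resolve_right (fun h => h.2 e2)).2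
      have := key0 χ hnolex x x' y₁ y₂ hx hy12 (e1.trans e2.symm)
      rw [e1] at this
      rcases this with h | h
      · exact absurd h n1
      · exact absurd h n2
    · have e2 : χ x' y₂ = c := by
        rcases hone y₂ hy₂ with ⟨h, _⟩ | ⟨h, _⟩
        · exact absurd (hb.mpr h) n1
        · exact h
      have n2 : χ x y₂ ≠ c := by
        intro h
        exact n1 (hb.mpr h)
      have := key0 χ hnolex x' x y₁ y₂ (Ne.symm hx) hy12 (e1.trans e2.symm)
      rw [e1] at this
      rcases this with h | h
      · exact absurd h n1  -- n1 : χ x y₁ ≠ c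
      · exact absurd h n2

/-- Let `χ` be an edge colouring of `K_{2,4}` (parts `Fin 2` and `Fin 4`) that is
not proper.  If `χ` admits no lexicographic copy of `C₄` with respect to any
vertex ordering, then it admits a monochromatic copy of `C₄`.  A copy of `C₄`
is given by `x₀ y₀ x₁ y₁` with cyclic edges coloured
`![χ x₀ y₀, χ x₁ y₀, χ x₁ y₁, χ x₀ y₁]`; an ordering of its four vertices is a
permutation `σ` of `Fin 4` giving the ranks of the cycle vertices. -/
theorem stmt_2 (χ : Fin 2 → Fin 4 → ℕ)
    (hnotproper : (∃ x : Fin 2, ∃ y y' : Fin 4, y ≠ y' ∧ χ x y = χ x y') ∨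
      (∃ y : Fin 4, ∃ x x' : Fin 2, x ≠ x' ∧ χ x y = χ x' y))
    (hnolex : ∀ (x₀ x₁ : Fin 2) (y₀ y₁ : Fin 4), x₀ ≠ x₁ → y₀ ≠ y₁ →
      ∀ σ : Equiv.Perm (Fin 4),
        ¬ ∃ φ : Fin 4 → ℕ, Function.Injective φ ∧
          ∀ i : Fin 4, (![χ x₀ y₀, χ x₁ y₀, χ x₁ y₁, χ x₀ y₁]) i =
            φ (if σ i < σ (i + 1) then i else i + 1)) :
    ∃ (x₀ x₁ : Fin 2) (y₀ y₁ : Fin 4), x₀ ≠ x₁ ∧ y₀ ≠ y₁ ∧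
      χ x₀ y₀ = χ x₁ y₀ ∧ χ x₀ y₀ = χ x₁ y₁ ∧ χ x₀ y₀ = χ x₀ y₁ := by
  have hnl : NoLex χ := hnolex
  rcases hnotproper with ⟨x, y, y', hy, hxy⟩ | ⟨y, x, x', hx, hxy⟩
  · have hx' : x ≠ x + 1 := by fin_cases x <;> decide
    rcases key0 χ hnl x (x+1) y y' hx' hy hxy with h | h
    · exact caseB χ hnl x (x+1) hx' y h.symm
    · exact caseB χ hnl x (x+1) hx' y' (hxy.symm.trans h.symm)
  · exact caseB χ hnl x x' hx y hxy
end

section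
/- Let U be a finite set, t ∈ ℕ, and suppose U is partitioned into parts (λ^{-1}(c))_{c ∈ C} each of size at most (α/8)|U| for some 0 < α < 1. Then there is a partition U = U_1 ∪ ... ∪ U_t with t ≤ 4/α such that each U_i has size at most (α/2)|U| and each part λ^{-1}(c) is entirely contained in some U_i. -/
/-!
Colour classes are distributed over `t = ⌊4/α⌋ ≥ 3/α` bins by list scheduling: each class goes
into a currently least loaded bin. That bin holds at most the average load `|U|/t ≤ (α/3)|U|`, so
after adding a class of size at most `(α/8)|U|` it still holds at most `(α/2)|U|`.
-/

open scoped Classical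

namespace Finset

theorem exists_sum_fiber_le_div_card_add {ι C 𝕜 : Type*} [Fintype ι] [Nonempty ι]
    [DecidableEq ι] [DecidableEq C] [Field 𝕜] [LinearOrder 𝕜] [IsStrictOrderedRing 𝕜]
    (s : Finset C) (w : C → 𝕜) (M : 𝕜) (hw : ∀ c ∈ s, 0 ≤ w c) (hM : ∀ c ∈ s, w c ≤ M)
    (hM₀ : 0 ≤ M) :
    ∃ f : C → ι, ∀ i, ∑ c ∈ s with f c = i, w c ≤ (∑ c ∈ s, w c) / Fintype.card ι + M := by
  induction s using Finset.induction_on with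
  | empty => exact ⟨fun _ => Classical.arbitrary ι, fun _ => by simpa using hM₀⟩
  | @insert c s hc ih =>
    obtain ⟨f, hf⟩ := ih (fun x hx => hw x (mem_insert_of_mem hx))
      (fun x hx => hM x (mem_insert_of_mem hx))
    have ht : (0 : 𝕜) < Fintype.card ι := by exact_mod_cast Fintype.card_pos
    have hwc : 0 ≤ w c / Fintype.card ι := div_nonneg (hw c (mem_insert_self c s)) ht.le
    obtain ⟨i₀, -, hi₀⟩ : ∃ i₀ ∈ univ, ∑ x ∈ s with f x = i₀, w x
        ≤ (∑ x ∈ s, w x) / Fintype.card ι := by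
      refine exists_le_of_sum_le univ_nonempty (le_of_eq ?_)
      rw [sum_fiberwise, sum_const, card_univ, nsmul_eq_mul, mul_div_cancel₀ _ ht.ne']
    refine ⟨Function.update f c i₀, fun i => ?_⟩
    have hs : ∀ i, {x ∈ s | Function.update f c i₀ x = i} = {x ∈ s | f x = i} :=
      fun i => filter_congr fun x hx => by rw [Function.update_of_ne (ne_of_mem_of_not_mem hx hc)]
    rw [filter_insert, hs, sum_insert hc, add_div, Function.update_self]
    split_ifs with hi
    · subst hi
      rw [sum_insert fun h => hc (mem_filter.1 h).1]
      linarith [hM c (mem_insert_self c s)]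
    · linarith [hf i]

theorem exists_card_fiber_comp_le_div_card_add {V C ι : Type*} [Fintype ι] [Nonempty ι]
    [DecidableEq ι] (U : Finset V) (lam : V → C) (M : ℝ) (hM₀ : 0 ≤ M)
    (hM : ∀ c : C, (#{v ∈ U | lam v = c} : ℝ) ≤ M) :
    ∃ f : C → ι, ∀ i, (#{v ∈ U | f (lam v) = i} : ℝ) ≤ #U / Fintype.card ι + M := by
  obtain ⟨f, hf⟩ := exists_sum_fiber_le_div_card_add (ι := ι) (U.image lam)
    (fun c => (#{v ∈ U | lam v = c} : ℝ)) M (fun _ _ => by positivity) (fun c _ => hM c) hM₀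
  refine ⟨f, fun i => ?_⟩
  have hcard :
      #{v ∈ U | f (lam v) = i} = ∑ c ∈ U.image lam with f c = i, #{v ∈ U | lam v = c} := by
    rw [card_eq_sum_card_fiberwise (f := lam) (t := {c ∈ U.image lam | f c = i})]
    · refine sum_congr rfl fun c hc => ?_
      rw [filter_filter]
      refine congrArg card (filter_congr fun v _ => ?_)
      rw [mem_filter] at hc
      exact ⟨And.right, fun h => ⟨h ▸ hc.2, h⟩⟩
    · intro v hv
      rw [mem_coe, mem_filter] at hv
      exact mem_filter.2 ⟨mem_image_of_mem lam hv.1, hv.2⟩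
  rw [hcard, card_eq_sum_card_image lam U]
  exact_mod_cast hf i

end Finset

theorem three_div_le_floor_four_div {α : ℝ} (hα0 : 0 < α) (hα1 : α ≤ 1) :
    3 / α ≤ ⌊4 / α⌋₊ := by
  have h : 1 ≤ 1 / α := one_le_one_div hα0 hα1
  calc 3 / α = 4 / α - 1 / α := by ring
    _ ≤ 4 / α - 1 := by linarith
    _ ≤ ⌊4 / α⌋₊ := (Nat.sub_one_lt_floor _).le

theorem stmt_7_general {V C : Type*} (U : Finset V) (lam : V → C)
    (α : ℝ) (hα0 : 0 < α) (hα1 : α < 1)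
    (hfib : ∀ c : C, ((U.filter (fun v => lam v = c)).card : ℝ) ≤ (α / 8) * U.card) :
    ∃ (t : ℕ) (P : Fin t → Finset V),
      (t : ℝ) ≤ 4 / α ∧
      (∀ i, P i ⊆ U) ∧
      (∀ v ∈ U, ∃! i, v ∈ P i) ∧
      (∀ i, ((P i).card : ℝ) ≤ (α / 2) * U.card) ∧
      (∀ c : C, ∃ i, U.filter (fun v => lam v = c) ⊆ P i) := by
  set t := ⌊4 / α⌋₊
  have ht : 3 / α ≤ t := three_div_le_floor_four_div hα0 hα1.le
  have ht₀ : (0 : ℝ) < t := (by positivity : (0 : ℝ) < 3 / α).trans_le ht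
  have : Nonempty (Fin t) := ⟨⟨0, by exact_mod_cast ht₀⟩⟩
  obtain ⟨f, hf⟩ :=
    Finset.exists_card_fiber_comp_le_div_card_add (ι := Fin t) U lam _ (by positivity) hfib
  refine ⟨t, fun i => U.filter fun v => f (lam v) = i, Nat.floor_le (by positivity),
    fun i => Finset.filter_subset _ _,
    fun v hv => ⟨f (lam v), Finset.mem_filter.2 ⟨hv, rfl⟩,
      fun i hi => (Finset.mem_filter.1 hi).2.symm⟩,
    fun i => ?_, fun c => ⟨f c, fun v hv => ?_⟩⟩
  · have hdiv : (U.card : ℝ) / t ≤ α / 3 * U.card := by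
      calc (U.card : ℝ) / t ≤ U.card / (3 / α) := by gcongr
        _ = α / 3 * U.card := by field_simp
    calc ((U.filter fun v => f (lam v) = i).card : ℝ)
        ≤ U.card / t + α / 8 * U.card := by simpa only [Fintype.card_fin] using hf i
      _ ≤ α / 3 * U.card + α / 8 * U.card := by gcongr
      _ ≤ α / 2 * U.card := by linarith [(by positivity : (0 : ℝ) ≤ α * U.card)]
  · rw [Finset.mem_filter] at hv ⊢
    exact ⟨hv.1, congrArg f hv.2⟩

/-- Greedy grouping of colour fibres: if every fibre `λ⁻¹(c) ∩ U` has size at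
most `(α/8)|U|`, then `U` can be partitioned into at most `4/α` parts, each of
size at most `(α/2)|U|`, with every fibre entirely contained in one part. -/
theorem stmt_7 {V C : Type*} [DecidableEq V] (U : Finset V) (lam : V → C)
    (α : ℝ) (hα0 : 0 < α) (hα1 : α < 1)
    (hfib : ∀ c : C, ((U.filter (fun v => lam v = c)).card : ℝ) ≤ (α / 8) * U.card) :
    ∃ (t : ℕ) (P : Fin t → Finset V),
      (t : ℝ) ≤ 4 / α ∧
      (∀ i, P i ⊆ U) ∧
      (∀ v ∈ U, ∃! i, v ∈ P i) ∧
      (∀ i, ((P i).card : ℝ) ≤ (α / 2) * U.card) ∧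
      (∀ c : C, ∃ i, U.filter (fun v => lam v = c) ⊆ P i) :=
  stmt_7_general U lam α hα0 hα1 hfib
end

section
/- Let G be a graph on n vertices with a vertex subset U partitioned as U = U_1 ∪ ... ∪ U_t, with t ≤ 4/α, |U_i| ≤ (α/2)|U| for all i, and 0 < α < 1/100, ε = α^2/(4(1+α)). Suppose e_G(U) ≥ (1−ε)p|U|^2/2 and e_G(U_i) ≤ (1+ε)p|U_i|^2/2 for all i. Then the number of edges of G[U] with endpoints in different parts U_i is at least (1−2α)p|U|^2/2. -/
open scoped Classical

/-- Ordered adjacent pairs of `G` with first coordinate in `S` and second in `T`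
(so an edge inside a set is counted twice). -/
noncomputable def ordPairs {V : Type*} (G : SimpleGraph V) (S T : Finset V) : ℕ :=
  ((S ×ˢ T).filter (fun q => G.Adj q.1 q.2)).card

/-- If `U` is partitioned into `t ≤ 4/α` parts of size at most `(α/2)|U|`, the
graph has at least `(1−ε)p|U|²/2` edges inside `U` and at most `(1+ε)p|U_i|²/2`
edges inside each part, then at least `(1−2α)p|U|²/2` edges of `G[U]` join
different parts.  (All edge counts are stated via ordered pairs, which counts
each edge exactly twice.) -/
theorem stmt_8 {V : Type*} [Fintype V] [DecidableEq V] (G : SimpleGraph V)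
    (n t : ℕ) (hn : Fintype.card V = n) (U : Finset V) (P : Fin t → Finset V)
    (α ε p : ℝ) (hα0 : 0 < α) (hα : α < 1 / 100) (hε : ε = α ^ 2 / (4 * (1 + α)))
    (hp : 0 < p) (ht : (t : ℝ) ≤ 4 / α)
    (hPsub : ∀ i, P i ⊆ U)
    (hPsize : ∀ i, ((P i).card : ℝ) ≤ (α / 2) * U.card)
    (hdisj : ∀ i j, i ≠ j → Disjoint (P i) (P j))
    (hcover : ∀ v ∈ U, ∃ i, v ∈ P i)
    (hlow : (1 - ε) * p * (U.card : ℝ) ^ 2 ≤ (ordPairs G U U : ℝ))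
    (hhigh : ∀ i, (ordPairs G (P i) (P i) : ℝ) ≤ (1 + ε) * p * ((P i).card : ℝ) ^ 2) :
    (1 - 2 * α) * p * (U.card : ℝ) ^ 2 ≤
      (((U ×ˢ U).filter
        (fun q => G.Adj q.1 q.2 ∧ ∀ i, ¬ (q.1 ∈ P i ∧ q.2 ∈ P i))).card : ℝ) := by
  classical
  set A := (U ×ˢ U).filter (fun q => G.Adj q.1 q.2) with hA
  set C := (U ×ˢ U).filter (fun q => G.Adj q.1 q.2 ∧ ∃ i, q.1 ∈ P i ∧ q.2 ∈ P i) with hC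
  set B := (U ×ˢ U).filter (fun q => G.Adj q.1 q.2 ∧ ∀ i, ¬ (q.1 ∈ P i ∧ q.2 ∈ P i)) with hB
  have hBalt : B = A.filter (fun q => ¬ ∃ i, q.1 ∈ P i ∧ q.2 ∈ P i) := by
    rw [hB, hA, Finset.filter_filter]
    apply Finset.filter_congr
    intro q _
    simp [not_exists]
  have hCalt : C = A.filter (fun q => ∃ i, q.1 ∈ P i ∧ q.2 ∈ P i) := by
    rw [hC, hA, Finset.filter_filter]
  have hsplit : C.card + B.card = A.card := by
    rw [hBalt, hCalt]
    exact Finset.card_filter_add_card_filter_not _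
  have hCsub : C ⊆ Finset.univ.biUnion
      (fun i => (P i ×ˢ P i).filter (fun q => G.Adj q.1 q.2)) := by
    intro q hq
    rw [hC, Finset.mem_filter] at hq
    obtain ⟨-, hadj, i, h1, h2⟩ := hq
    simp only [Finset.mem_biUnion, Finset.mem_univ, Finset.mem_filter,
      Finset.mem_product, true_and]
    exact ⟨i, ⟨h1, h2⟩, hadj⟩
  have hCle : (C.card : ℝ) ≤ ∑ i, (ordPairs G (P i) (P i) : ℝ) := by
    have h1 : C.card ≤ ∑ i, ordPairs G (P i) (P i) :=
      le_trans (Finset.card_le_card hCsub) (Finset.card_biUnion_le)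
    exact_mod_cast h1
  have hsumP : (∑ i, ((P i).card : ℝ)) ≤ (U.card : ℝ) := by
    have h1 : ∑ i, (P i).card = (Finset.univ.biUnion P).card :=
      (Finset.card_biUnion (fun i _ j _ hij => hdisj i j hij)).symm
    have h2 : Finset.univ.biUnion P ⊆ U := by
      intro v hv
      rw [Finset.mem_biUnion] at hv
      obtain ⟨i, -, hv⟩ := hv
      exact hPsub i hv
    have := Finset.card_le_card h2
    have : ∑ i, (P i).card ≤ U.card := h1 ▸ this
    exact_mod_cast this
  have hε0 : 0 ≤ ε := by
    rw [hε]; positivity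
  have hεeq : ε * (4 * (1 + α)) = α ^ 2 := by
    rw [hε]; field_simp
  have hsum2 : ∑ i, (ordPairs G (P i) (P i) : ℝ) ≤ (1 + ε) * p * (α / 2) * (U.card : ℝ) ^ 2 := by
    calc ∑ i, (ordPairs G (P i) (P i) : ℝ) ≤ ∑ i, (1 + ε) * p * ((P i).card : ℝ) ^ 2 :=
          Finset.sum_le_sum (fun i _ => hhigh i)
      _ ≤ ∑ i, (1 + ε) * p * ((α / 2) * (U.card : ℝ) * ((P i).card : ℝ)) := by
          apply Finset.sum_le_sum
          intro i _
          have h1 : ((P i).card : ℝ) ^ 2 ≤ (α / 2) * (U.card : ℝ) * ((P i).card : ℝ) := by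
            have := hPsize i
            nlinarith [(Nat.cast_nonneg (P i).card : (0:ℝ) ≤ ((P i).card : ℝ))]
          exact mul_le_mul_of_nonneg_left h1 (mul_nonneg (by linarith) hp.le)
      _ = (1 + ε) * p * ((α / 2) * (U.card : ℝ)) * ∑ i, ((P i).card : ℝ) := by
          rw [Finset.mul_sum]; exact Finset.sum_congr rfl (fun i _ => by ring)
      _ ≤ (1 + ε) * p * (α / 2) * (U.card : ℝ) ^ 2 := by
          have hnn : 0 ≤ (1 + ε) * p * ((α / 2) * (U.card : ℝ)) := by positivity
          nlinarith [mul_le_mul_of_nonneg_left hsumP hnn]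
  have hABC : (A.card : ℝ) - (C.card : ℝ) ≤ (B.card : ℝ) := by
    have : (C.card : ℝ) + (B.card : ℝ) = (A.card : ℝ) := by exact_mod_cast hsplit
    linarith
  have hAord : (ordPairs G U U : ℝ) = (A.card : ℝ) := by rw [hA, ordPairs]
  have hcoef : (1 - 2 * α) ≤ (1 - ε) - (1 + ε) * (α / 2) := by
    nlinarith [hεeq, hε0, hα0, hα]
  have hU2 : (0:ℝ) ≤ (U.card : ℝ) ^ 2 := by positivity
  calc (1 - 2 * α) * p * (U.card : ℝ) ^ 2
      ≤ ((1 - ε) - (1 + ε) * (α / 2)) * p * (U.card : ℝ) ^ 2 := by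
        have := mul_le_mul_of_nonneg_right
          (mul_le_mul_of_nonneg_right hcoef hp.le) hU2
        linarith
    _ = (1 - ε) * p * (U.card : ℝ) ^ 2 - (1 + ε) * p * (α / 2) * (U.card : ℝ) ^ 2 := by ring
    _ ≤ (A.card : ℝ) - (C.card : ℝ) := by
        rw [← hAord] at *
        linarith [hlow, hsum2, hCle]
    _ ≤ (B.card : ℝ) := hABC
end

section
/- Let D be a finite oriented graph on vertex set U with at least (1−2α)p|U|^2/2 edges (where 0 < α < 1/100, p > 0, and ε = α^2/(4(1+α))), and suppose that for all disjoint V_1, V_2 ⊆ U, the number of edges between V_1 and V_2 is at most (1+ε)p|V_1||V_2| and the number of edges inside V_2 is at most (1+ε)p|V_2|^2/2. Then the set V_0 of vertices with out-degree at least (2p/5)|U| satisfies |V_0| ≥ |U|/6. -/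
open scoped Classical

/-- Ordered pairs of `S × T` related by `r`. -/
noncomputable def arcCount {V : Type*} (r : V → V → Prop) (S T : Finset V) : ℕ :=
  ((S ×ˢ T).filter (fun q => r q.1 q.2)).card

lemma arcCount_eq_sum {V : Type*} (r : V → V → Prop) (S T : Finset V) :
    arcCount r S T = ∑ v ∈ S, (T.filter (fun w => r v w)).card := by
  unfold arcCount
  rw [Finset.card_filter, Finset.sum_product]
  exact Finset.sum_congr rfl fun v _ => (Finset.card_filter _ _).symm

lemma arcCount_union_left {V : Type*} [DecidableEq V] (r : V → V → Prop) (A B T : Finset V)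
    (h : Disjoint A B) :
    arcCount r (A ∪ B) T = arcCount r A T + arcCount r B T := by
  simp [arcCount_eq_sum, Finset.sum_union h]

lemma arcCount_union_right {V : Type*} [DecidableEq V] (r : V → V → Prop) (S A B : Finset V)
    (h : Disjoint A B) :
    arcCount r S (A ∪ B) = arcCount r S A + arcCount r S B := by
  rw [arcCount_eq_sum, arcCount_eq_sum, arcCount_eq_sum, ← Finset.sum_add_distrib]
  refine Finset.sum_congr rfl fun v _ => ?_
  rw [Finset.filter_union, Finset.card_union_of_disjoint (Finset.disjoint_filter_filter h)]

set_option maxHeartbeats 800000 in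
/-- If an oriented graph `D` on `U` has at least `(1−2α)p|U|²/2` edges and
satisfies the pseudorandom upper bounds on edge counts between and inside
subsets, then the set `V₀` of vertices of out-degree at least `(2p/5)|U|`
satisfies `|V₀| ≥ |U|/6`. -/
theorem stmt_9 {V : Type*} [Fintype V] [DecidableEq V] (U : Finset V)
    (r : V → V → Prop) (hasym : ∀ u v, r u v → ¬ r v u) (hirr : ∀ u, ¬ r u u)
    (p α ε : ℝ) (hα0 : 0 < α) (hα : α < 1 / 100) (hε : ε = α ^ 2 / (4 * (1 + α)))
    (hp : 0 < p)
    (hE : (1 - 2 * α) * p * (U.card : ℝ) ^ 2 / 2 ≤ (arcCount r U U : ℝ))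
    (hbound : ∀ V₁ V₂ : Finset V, V₁ ⊆ U → V₂ ⊆ U → Disjoint V₁ V₂ →
      ((arcCount r V₁ V₂ + arcCount r V₂ V₁ : ℕ) : ℝ) ≤ (1 + ε) * p * V₁.card * V₂.card ∧
      (arcCount r V₂ V₂ : ℝ) ≤ (1 + ε) * p * (V₂.card : ℝ) ^ 2 / 2) :
    (U.card : ℝ) / 6 ≤
      ((U.filter (fun v =>
        (2 * p / 5) * U.card ≤ ((U.filter (fun w => r v w)).card : ℝ))).card : ℝ) := by
  set V₀ := U.filter (fun v =>
      (2 * p / 5) * U.card ≤ ((U.filter (fun w => r v w)).card : ℝ)) with hV₀def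
  by_contra hcon
  push_neg at hcon
  set W : Finset V := U \ V₀ with hWdef
  have hV₀U : V₀ ⊆ U := Finset.filter_subset _ _
  have hWU : W ⊆ U := Finset.sdiff_subset
  have hdisj : Disjoint V₀ W := Finset.disjoint_sdiff
  have hunion : V₀ ∪ W = U := Finset.union_sdiff_of_subset hV₀U
  have hcard : (V₀.card : ℝ) + (W.card : ℝ) = (U.card : ℝ) := by
    rw [← Nat.cast_add, ← Finset.card_union_of_disjoint hdisj, hunion]
  have hk0 : (0 : ℝ) ≤ (V₀.card : ℝ) := Nat.cast_nonneg _
  have hn0 : (0 : ℝ) < (U.card : ℝ) := by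
    by_contra h
    push_neg at h
    have : (U.card : ℝ) / 6 ≤ 0 := by linarith
    linarith
  have hn1 : (1 : ℝ) ≤ (U.card : ℝ) := by
    have : 0 < U.card := by exact_mod_cast hn0
    exact_mod_cast this
  have hmpos : (0 : ℝ) < (W.card : ℝ) := by linarith
  have hWne : W.Nonempty := Finset.card_pos.mp (by exact_mod_cast hmpos)
  -- epsilon bounds
  have h1α : (0 : ℝ) < 1 + α := by linarith
  have hε0 : 0 < ε := by
    rw [hε]; positivity
  have hεlt : ε < 1 / 10000 := by
    rw [hε, div_lt_iff₀ (by positivity)]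
    nlinarith
  -- decomposition of the edge count
  have hdecomp : arcCount r U U =
      arcCount r V₀ V₀ + arcCount r V₀ W + (arcCount r W V₀ + arcCount r W W) := by
    have ha := arcCount_union_left r V₀ W U hdisj
    have hb := arcCount_union_right r V₀ V₀ W hdisj
    have hc := arcCount_union_right r W V₀ W hdisj
    rw [hunion] at ha hb hc
    rw [ha, hb, hc]
  -- bounds
  have h1 := (hbound ∅ V₀ (Finset.empty_subset U) hV₀U (Finset.disjoint_empty_left _)).2
  have h2 := (hbound V₀ W hV₀U hWU hdisj).1
  push_cast at h2
  have hout : ∀ v ∈ W, ((W.filter (fun w => r v w)).card : ℝ) < 2 * p / 5 * U.card := by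
    intro v hv
    have hvU : v ∈ U := hWU hv
    have hvn : v ∉ V₀ := (Finset.mem_sdiff.mp hv).2
    have hlt : ¬ ((2 * p / 5) * U.card ≤ ((U.filter (fun w => r v w)).card : ℝ)) := by
      intro h'
      exact hvn (Finset.mem_filter.mpr ⟨hvU, h'⟩)
    have hle : ((W.filter (fun w => r v w)).card : ℝ) ≤ ((U.filter (fun w => r v w)).card : ℝ) := by
      exact_mod_cast Finset.card_le_card (Finset.filter_subset_filter _ hWU)
    push_neg at hlt
    linarith
  have h3 : (arcCount r W W : ℝ) < 2 * p / 5 * U.card * W.card := by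
    rw [arcCount_eq_sum]
    push_cast
    calc (∑ v ∈ W, ((W.filter (fun w => r v w)).card : ℝ))
        < ∑ _v ∈ W, 2 * p / 5 * U.card := Finset.sum_lt_sum_of_nonempty hWne hout
      _ = W.card * (2 * p / 5 * U.card) := by rw [Finset.sum_const, nsmul_eq_mul]
      _ = 2 * p / 5 * U.card * W.card := by ring
  -- put everything together
  set n : ℝ := (U.card : ℝ)
  set k : ℝ := (V₀.card : ℝ)
  set m : ℝ := (W.card : ℝ)
  have hdecompR : (arcCount r U U : ℝ) =
      (arcCount r V₀ V₀ : ℝ) + ((arcCount r V₀ W : ℝ) + (arcCount r W V₀ : ℝ))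
        + (arcCount r W W : ℝ) := by
    rw [hdecomp]; push_cast; ring
  have h1' : (arcCount r V₀ V₀ : ℝ) ≤ (1 + ε) * p * k ^ 2 / 2 := h1
  have key : (1 + ε) * k ^ 2 / 2 + (1 + ε) * k * m + 2 / 5 * n * m
      < (1 - 2 * α) * n ^ 2 / 2 := by
    have hm : m = n - k := by linarith
    have h6 : 0 < n / 6 - k := by linarith
    nlinarith [mul_pos h6 hn0, mul_pos h6 h6, mul_nonneg hε0.le hk0,
      mul_nonneg (mul_nonneg hε0.le hk0) hk0, mul_nonneg (mul_nonneg hε0.le h6.le) hn0.le,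
      sq_nonneg (n - 6 * k)]
  have key' := mul_lt_mul_of_pos_left key hp
  nlinarith [h1', h2, h3, hE, hdecompR, key']
end

section
/- Fix an integer ℓ > 2, a path Q with ℓ vertices in K_n with endpoint pair f, and p = p(n) with pn = ω(n^{1/(ℓ-1)}). Define Δ* = Σ_P ℙ[P ⊆ G(n,p) | Q ⊆ G(n,p)], where the sum ranges over copies P of P_ℓ in K_n with endpoints f satisfying 1 ≤ |E(P) ∩ E(Q)| < ℓ−1. Then Δ* ≤ 2^{ℓ-1} · n^{ℓ-2} p^{ℓ-1} / (np). -/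
/-!
Write `f = s(a, b)`. Orienting a copy of `P_ℓ` from `a` to `b` turns it into a walk
`a = v 0, …, v (ℓ-1) = b`, so the copies whose edge set contains a given `I ⊆ E(Q)` with
`|I| = r` are at most as many as such walks through all edges of `I`. Recording, for each edge of
`I`, its position in the walk and the direction in which it is traversed pins the walk down at
the two ends and at the ends of these edges; the edges of `I` cover at least `r` internal
vertices, so at least `r + 2` positions are fixed and at most `(2(ℓ-1))^r n^{ℓ-2-r}` walks remain.
For `r = 1` this is too coarse: an edge at an end of the walk is fixed by its position alone, which
gives `2 n^{ℓ-3} + 2(ℓ-3) n^{ℓ-4}`.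

Summing over the `binom(ℓ-1, r)` sets `I`, the term `r = 1` of `Δ*` is at most
`(3ℓ-5) n^{ℓ-3} p^{ℓ-2}` once `n ≥ 2(ℓ-1)`, and each term `r ≥ 2` is
`O(n^{ℓ-3} p^{ℓ-2} / (np)^{r-1})`, hence at most `n^{ℓ-3} p^{ℓ-2}` once `np` is large;
finally `(3ℓ-5) + (ℓ-3) ≤ 2^{ℓ-1}`.
-/

open scoped Classical

/-- The edge set of the walk `w 0, w 1, …, w (ℓ-1)`. -/
def pathEdges (n ℓ : ℕ) (w : ℕ → Fin n) : Finset (Sym2 (Fin n)) :=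
  (Finset.range (ℓ - 1)).image (fun i => s(w i, w (i + 1)))

/-- `w` labels a copy of the path `P_ℓ` in `K_n` with endpoint pair `f`. -/
def isPathCopy (n ℓ : ℕ) (f : Sym2 (Fin n)) (w : ℕ → Fin n) : Prop :=
  Set.InjOn w (Set.Iio ℓ) ∧ s(w 0, w (ℓ - 1)) = f

/-- `Δ* = Σ_P ℙ[P ⊆ G(n,p) ∣ Q ⊆ G(n,p)]`, summed over (unlabelled) copies `P`
of `P_ℓ` with endpoints `f` satisfying `1 ≤ |E(P) ∩ E(Q)| < ℓ−1`; the
conditional probability equals `p^(ℓ−1−|E(P)∩E(Q)|)`. -/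
noncomputable def deltaStar (n ℓ : ℕ) (p : ℝ) (f : Sym2 (Fin n))
    (EQ : Finset (Sym2 (Fin n))) : ℝ :=
  ∑ A ∈ Finset.univ.filter (fun A : Finset (Sym2 (Fin n)) =>
      (∃ w, isPathCopy n ℓ f w ∧ pathEdges n ℓ w = A) ∧
      1 ≤ (A ∩ EQ).card ∧ (A ∩ EQ).card < ℓ - 1),
    p ^ (ℓ - 1 - (A ∩ EQ).card)

open Finset Filter

theorem Sym2.eq_and_eq_of_mk_eq_mk {α : Type*} {u u' w w' : α} (h : s(u, u') = s(w, w'))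
    (h' : u = w ∨ u' = w') : u = w ∧ u' = w' := by
  rcases h' with rfl | rfl
  · exact ⟨rfl, Sym2.congr_right.1 h⟩
  · exact ⟨Sym2.congr_left.1 h, rfl⟩

theorem Sym2.eq_and_eq_of_mk_eq_of_iff {α : Type*} {u u' w w' x : α} {z : Sym2 α}
    (hu : s(u, u') = z) (hw : s(w, w') = z) (hx : x ∈ z) (h : u = x ↔ w = x) :
    u = w ∧ u' = w' := by
  obtain ⟨y, rfl⟩ := Sym2.mem_iff_exists.1 hx
  rw [Sym2.eq_iff] at hu hw
  grind

section Extension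

variable {α : Type*} {ℓ : ℕ}

def natExtend (d : α) (v : Fin ℓ → α) (i : ℕ) : α :=
  if h : i < ℓ then v ⟨i, h⟩ else d

theorem natExtend_of_lt (d : α) (v : Fin ℓ → α) {i : ℕ} (h : i < ℓ) :
    natExtend d v i = v ⟨i, h⟩ :=
  dif_pos h

theorem card_le_pow_of_forall_eq_on [Fintype α] (d : α) (s : Finset (Fin ℓ → α))
    {D : Finset ℕ} (hD : D ⊆ range ℓ)
    (h : ∀ v ∈ s, ∀ w ∈ s, ∀ j ∈ D, natExtend d v j = natExtend d w j) :
    #s ≤ Fintype.card α ^ (ℓ - #D) := by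
  set F := univ \ D.attachFin (fun m hm => mem_range.1 (hD hm))
  have hF : #F = ℓ - #D := by
    rw [card_sdiff_of_subset (subset_univ _), card_attachFin, card_univ, Fintype.card_fin]
  calc #s ≤ #(univ : Finset (F → α)) := by
        refine card_le_card_of_injOn (fun v (j : F) => v j) (fun _ _ => mem_coe.2 (mem_univ _)) ?_
        intro v hv w hw hvw
        funext j
        by_cases hj : j ∈ F
        · exact congrFun hvw ⟨j, hj⟩
        · have hjD : (j : ℕ) ∈ D := by simpa [F] using hj
          simpa [natExtend_of_lt d _ j.isLt] using h v hv w hw j hjD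
    _ = Fintype.card α ^ (ℓ - #D) := by simp [hF]

end Extension

section Walks

variable {n ℓ : ℕ}

theorem pathEdges_congr {w w' : ℕ → Fin n} (h : ∀ i < ℓ, w i = w' i) :
    pathEdges n ℓ w = pathEdges n ℓ w' :=
  image_congr fun i hi => by
    have hi : i < ℓ - 1 := by simpa using hi
    simp only [h i (by omega), h (i + 1) (by omega)]

theorem pathEdges_reverse (w : ℕ → Fin n) :
    pathEdges n ℓ (fun i => w (ℓ - 1 - i)) = pathEdges n ℓ w := by
  ext e
  simp only [pathEdges, mem_image, mem_range]
  constructor <;> rintro ⟨i, hi, rfl⟩ <;> refine ⟨ℓ - 2 - i, by omega, ?_⟩ <;>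
    rw [Sym2.eq_swap] <;> congr 2 <;> omega

theorem exists_pathEdges_eq_of_endpoints {w : ℕ → Fin n} {a b : Fin n}
    (h : s(w 0, w (ℓ - 1)) = s(a, b)) :
    ∃ w' : ℕ → Fin n, w' 0 = a ∧ w' (ℓ - 1) = b ∧ pathEdges n ℓ w' = pathEdges n ℓ w := by
  rcases Sym2.eq_iff.1 h with ⟨h0, h1⟩ | ⟨h0, h1⟩
  · exact ⟨w, h0, h1, rfl⟩
  · exact ⟨fun i => w (ℓ - 1 - i), by simpa using h1, by simpa using h0, pathEdges_reverse w⟩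

noncomputable def pathEdgeSets (n ℓ : ℕ) (f : Sym2 (Fin n)) : Finset (Finset (Sym2 (Fin n))) :=
  {A | ∃ w, isPathCopy n ℓ f w ∧ pathEdges n ℓ w = A}

/-- Walks `a = v 0, …, v (ℓ-1) = b` using every edge of `I`; they need not be paths. -/
noncomputable def walksContaining (n ℓ : ℕ) (a b : Fin n) (I : Finset (Sym2 (Fin n))) :
    Finset (Fin ℓ → Fin n) :=
  {v | natExtend a v 0 = a ∧ natExtend a v (ℓ - 1) = b ∧ I ⊆ pathEdges n ℓ (natExtend a v)}

theorem mem_walksContaining {a b : Fin n} {I : Finset (Sym2 (Fin n))} {v : Fin ℓ → Fin n} :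
    v ∈ walksContaining n ℓ a b I ↔
      natExtend a v 0 = a ∧ natExtend a v (ℓ - 1) = b ∧ I ⊆ pathEdges n ℓ (natExtend a v) := by
  simp [walksContaining]

theorem card_filter_pathEdgeSets_le (hℓ : 0 < ℓ) (a b : Fin n) (I : Finset (Sym2 (Fin n))) :
    #{A ∈ pathEdgeSets n ℓ s(a, b) | I ⊆ A} ≤ #(walksContaining n ℓ a b I) := by
  refine (card_le_card fun A hA => ?_).trans
    (card_image_le (f := fun v => pathEdges n ℓ (natExtend a v)))
  simp only [pathEdgeSets, mem_filter, mem_univ, true_and] at hA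
  obtain ⟨⟨w, ⟨-, hend⟩, rfl⟩, hI⟩ := hA
  obtain ⟨w', h0, h1, hw'⟩ := exists_pathEdges_eq_of_endpoints hend
  have hext : ∀ i < ℓ, natExtend a (fun j : Fin ℓ => w' j) i = w' i :=
    fun i hi => natExtend_of_lt _ _ hi
  refine mem_image.2 ⟨fun j => w' j, ?_, by rw [pathEdges_congr hext, hw']⟩
  rw [mem_walksContaining, hext 0 hℓ, hext (ℓ - 1) (by omega), pathEdges_congr hext, hw']
  exact ⟨h0, h1, hI⟩

end Walks

section Positions

variable {n ℓ : ℕ}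

/-- `0` when `e` is not an edge of the walk. -/
noncomputable def edgeIndex (ℓ : ℕ) (w : ℕ → Fin n) (e : Sym2 (Fin n)) : ℕ :=
  if h : ∃ i ∈ range (ℓ - 1), s(w i, w (i + 1)) = e then Nat.find h else 0

theorem edgeIndex_spec {w : ℕ → Fin n} {e : Sym2 (Fin n)} (he : e ∈ pathEdges n ℓ w) :
    edgeIndex ℓ w e < ℓ - 1 ∧ s(w (edgeIndex ℓ w e), w (edgeIndex ℓ w e + 1)) = e := by
  have h : ∃ i ∈ range (ℓ - 1), s(w i, w (i + 1)) = e := mem_image.1 he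
  rw [edgeIndex, dif_pos h]
  simpa using Nat.find_spec h

theorem edgeIndex_injOn (w : ℕ → Fin n) : Set.InjOn (edgeIndex ℓ w) (pathEdges n ℓ w) :=
  fun _ he _ he' h => (edgeIndex_spec he).2.symm.trans (h ▸ (edgeIndex_spec he').2)

/-- The position of `e` in the walk `w`, and whether `w` traverses it starting at `e.out.1`. -/
noncomputable def edgeSignature (ℓ : ℕ) (w : ℕ → Fin n) (e : Sym2 (Fin n)) : ℕ × Bool :=
  (edgeIndex ℓ w e, decide (w (edgeIndex ℓ w e) = e.out.1))

theorem eq_and_eq_of_edgeSignature_eq {w w' : ℕ → Fin n} {e : Sym2 (Fin n)}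
    (he : e ∈ pathEdges n ℓ w) (he' : e ∈ pathEdges n ℓ w')
    (h : edgeSignature ℓ w e = edgeSignature ℓ w' e) :
    w (edgeIndex ℓ w e) = w' (edgeIndex ℓ w e) ∧
      w (edgeIndex ℓ w e + 1) = w' (edgeIndex ℓ w e + 1) := by
  have hidx : edgeIndex ℓ w e = edgeIndex ℓ w' e := congrArg Prod.fst h
  have hspec' := (edgeIndex_spec he').2
  rw [← hidx] at hspec'
  refine Sym2.eq_and_eq_of_mk_eq_of_iff (edgeIndex_spec he).2 hspec' (Sym2.out_fst_mem e) ?_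
  simpa [edgeSignature, hidx] using congrArg Prod.snd h

def coveredIndices (ℓ : ℕ) (J : Finset ℕ) : Finset ℕ :=
  J ∪ J.image (· + 1) ∪ {0, ℓ - 1}

theorem coveredIndices_subset_range {J : Finset ℕ} (hℓ : 0 < ℓ) (hJ : J ⊆ range (ℓ - 1)) :
    coveredIndices ℓ J ⊆ range ℓ := by
  intro j hj
  simp only [coveredIndices, mem_union, mem_image, mem_insert, mem_singleton] at hj
  rw [mem_range]
  rcases hj with (hj | ⟨i, hi, rfl⟩) | rfl | rfl
  · have := mem_range.1 (hJ hj); omega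
  · have := mem_range.1 (hJ hi); omega
  · exact hℓ
  · omega

theorem card_add_two_le_card_coveredIndices {J : Finset ℕ} (hℓ : 2 ≤ ℓ)
    (hJ : J ⊆ range (ℓ - 1)) (hJc : #J ≤ ℓ - 2) : #J + 2 ≤ #(coveredIndices ℓ J) := by
  obtain ⟨m, hm, hmJ⟩ := exists_mem_notMem_of_card_lt_card (s := J) (t := range (ℓ - 1))
    (by rw [card_range]; omega)
  have hJ' : ∀ j ∈ J, j < ℓ - 1 ∧ j ≠ m ∧ m < ℓ - 1 := fun j hj =>
    ⟨mem_range.1 (hJ hj), fun h => hmJ (h ▸ hj), mem_range.1 hm⟩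
  -- the edge at position `j ∈ J` has the internal end `j + 1` if `j < m`, and `j` if `j > m`
  let φ : ℕ → ℕ := fun j => if j < m then j + 1 else j
  have hφ : Set.InjOn φ J := by
    intro i hi j hj h
    have := hJ' i hi; have := hJ' j hj
    simp only [φ] at h
    split_ifs at h <;> omega
  have hdisj : Disjoint (J.image φ) {0, ℓ - 1} := by
    simp only [disjoint_left, mem_image, mem_insert, mem_singleton]
    rintro _ ⟨j, hj, rfl⟩
    have := hJ' j hj
    simp only [φ]
    split_ifs <;> grind
  calc #J + 2 = #(J.image φ ∪ {0, ℓ - 1}) := by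
        rw [card_union_of_disjoint hdisj, card_image_of_injOn hφ, card_pair (by omega)]
    _ ≤ #(coveredIndices ℓ J) := by
        refine card_le_card (union_subset_union (fun k hk => ?_) subset_rfl)
        obtain ⟨j, hj, rfl⟩ := mem_image.1 hk
        simp only [φ]
        split_ifs
        · exact mem_union_right _ (mem_image_of_mem _ hj)
        · exact mem_union_left _ hj

end Positions

section Counting

variable {n ℓ : ℕ}

theorem eqOn_coveredIndices_of_edgeSignature_eq {w w' : ℕ → Fin n} {I : Finset (Sym2 (Fin n))}
    (h0 : w 0 = w' 0) (hlast : w (ℓ - 1) = w' (ℓ - 1))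
    (hI : I ⊆ pathEdges n ℓ w) (hI' : I ⊆ pathEdges n ℓ w')
    (h : ∀ e ∈ I, edgeSignature ℓ w e = edgeSignature ℓ w' e) :
    Set.EqOn w w' (coveredIndices ℓ (I.image (edgeIndex ℓ w))) := by
  intro j hj
  simp only [coveredIndices, coe_union, coe_image, coe_insert, coe_singleton, Set.mem_union,
    Set.mem_image, Set.mem_insert_iff, Set.mem_singleton_iff] at hj
  rcases hj with (⟨e, he, rfl⟩ | ⟨_, ⟨e, he, rfl⟩, rfl⟩) | rfl | rfl
  · exact (eq_and_eq_of_edgeSignature_eq (hI he) (hI' he) (h e he)).1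
  · exact (eq_and_eq_of_edgeSignature_eq (hI he) (hI' he) (h e he)).2
  · exact h0
  · exact hlast

theorem card_filter_edgeSignature_eq_le (hℓ : 2 ≤ ℓ) (a b : Fin n) {I : Finset (Sym2 (Fin n))}
    (hI : #I ≤ ℓ - 2) (k : I → ℕ × Bool) :
    #{v ∈ walksContaining n ℓ a b I |
      (fun e : I => edgeSignature ℓ (natExtend a v) e) = k} ≤ n ^ (ℓ - 2 - #I) := by
  set F := {v ∈ walksContaining n ℓ a b I | (fun e : I => edgeSignature ℓ (natExtend a v) e) = k}
  obtain hF | ⟨v₀, hv₀⟩ := F.eq_empty_or_nonempty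
  · simp [hF]
  have hF : ∀ v ∈ F, v ∈ walksContaining n ℓ a b I ∧
      ∀ e (he : e ∈ I), edgeSignature ℓ (natExtend a v) e = k ⟨e, he⟩ :=
    fun v hv => ⟨(mem_filter.1 hv).1, fun e he => congrFun (mem_filter.1 hv).2 ⟨e, he⟩⟩
  obtain ⟨hW₀, hk₀⟩ := hF v₀ hv₀
  obtain ⟨-, -, hI₀⟩ := mem_walksContaining.1 hW₀
  set J := I.image (edgeIndex ℓ (natExtend a v₀))
  have hJ : J ⊆ range (ℓ - 1) := fun j hj => by
    obtain ⟨e, he, rfl⟩ := mem_image.1 hj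
    exact mem_range.2 (edgeIndex_spec (hI₀ he)).1
  have hJc : #J = #I := card_image_of_injOn ((edgeIndex_injOn _).mono hI₀)
  have hagree : ∀ v ∈ F, ∀ w ∈ F, ∀ j ∈ coveredIndices ℓ J, natExtend a v j = natExtend a w j := by
    intro v hv w hw j hj
    obtain ⟨hWv, hkv⟩ := hF v hv
    obtain ⟨hWw, hkw⟩ := hF w hw
    obtain ⟨hv0, hv1, hvI⟩ := mem_walksContaining.1 hWv
    obtain ⟨hw0, hw1, hwI⟩ := mem_walksContaining.1 hWw
    have hJv : I.image (edgeIndex ℓ (natExtend a v)) = J := image_congr fun e he =>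
      (congrArg Prod.fst (hkv e he)).trans (congrArg Prod.fst (hk₀ e he)).symm
    refine eqOn_coveredIndices_of_edgeSignature_eq (hv0.trans hw0.symm) (hv1.trans hw1.symm)
      hvI hwI (fun e he => (hkv e he).trans (hkw e he).symm) ?_
    rwa [hJv]
  calc #F ≤ n ^ (ℓ - #(coveredIndices ℓ J)) := by
        simpa using card_le_pow_of_forall_eq_on a F
          (coveredIndices_subset_range (by omega) hJ) hagree
    _ ≤ n ^ (ℓ - 2 - #I) := by
        have := card_add_two_le_card_coveredIndices hℓ hJ (hJc ▸ hI)
        exact Nat.pow_le_pow_right a.pos (by omega)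

theorem card_walksContaining_le (hℓ : 2 ≤ ℓ) (a b : Fin n) {I : Finset (Sym2 (Fin n))}
    (hI : #I ≤ ℓ - 2) :
    #(walksContaining n ℓ a b I) ≤ (2 * (ℓ - 1)) ^ #I * n ^ (ℓ - 2 - #I) := by
  have hmaps : ∀ v ∈ walksContaining n ℓ a b I,
      (fun e : I => edgeSignature ℓ (natExtend a v) e) ∈
        Fintype.piFinset fun _ => range (ℓ - 1) ×ˢ (univ : Finset Bool) :=
    fun v hv => Fintype.mem_piFinset.2 fun e => mem_product.2
      ⟨mem_range.2 (edgeIndex_spec ((mem_walksContaining.1 hv).2.2 e.2)).1, mem_univ _⟩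
  calc #(walksContaining n ℓ a b I)
      ≤ n ^ (ℓ - 2 - #I) * #(Fintype.piFinset fun _ : I => range (ℓ - 1) ×ˢ univ) :=
        card_le_mul_card_image_of_maps_to hmaps _ fun k _ =>
          card_filter_edgeSignature_eq_le hℓ a b hI k
    _ = (2 * (ℓ - 1)) ^ #I * n ^ (ℓ - 2 - #I) := by
        simp [Fintype.card_piFinset, mul_comm]

theorem card_filter_edgeIndex_eq_le_of_end (hℓ : 3 ≤ ℓ) (a b : Fin n) (e : Sym2 (Fin n))
    {i : ℕ} (hi : i = 0 ∨ i = ℓ - 2) :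
    #{v ∈ walksContaining n ℓ a b {e} | edgeIndex ℓ (natExtend a v) e = i} ≤ n ^ (ℓ - 3) := by
  -- at an end of the walk one vertex of the edge is known, and it determines the other one
  have hagree : ∀ v ∈ {v ∈ walksContaining n ℓ a b {e} | edgeIndex ℓ (natExtend a v) e = i},
      ∀ w ∈ {v ∈ walksContaining n ℓ a b {e} | edgeIndex ℓ (natExtend a v) e = i},
      ∀ j ∈ coveredIndices ℓ {i}, natExtend a v j = natExtend a w j := by
    intro v hv w hw j hj
    simp only [mem_filter, mem_walksContaining, singleton_subset_iff] at hv hw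
    obtain ⟨⟨hv0, hv1, hve⟩, hvi⟩ := hv
    obtain ⟨⟨hw0, hw1, hwe⟩, hwi⟩ := hw
    have hsv : s(natExtend a v i, natExtend a v (i + 1)) = e := hvi ▸ (edgeIndex_spec hve).2
    have hsw : s(natExtend a w i, natExtend a w (i + 1)) = e := hwi ▸ (edgeIndex_spec hwe).2
    have := Sym2.eq_and_eq_of_mk_eq_mk (hsv.trans hsw.symm) (by
      rcases hi with rfl | rfl
      · exact .inl (hv0.trans hw0.symm)
      · rw [show ℓ - 2 + 1 = ℓ - 1 by omega]; exact .inr (hv1.trans hw1.symm))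
    simp only [coveredIndices, mem_union, mem_image, mem_singleton, mem_insert] at hj
    rcases hj with (rfl | ⟨_, rfl, rfl⟩) | rfl | rfl
    exacts [this.1, this.2, hv0.trans hw0.symm, hv1.trans hw1.symm]
  have := card_add_two_le_card_coveredIndices (ℓ := ℓ) (J := {i}) (by omega)
    (by simp; omega) (by simp; omega)
  refine (card_le_pow_of_forall_eq_on a _
    (coveredIndices_subset_range (by omega) (by simp; omega)) hagree).trans ?_
  simpa using Nat.pow_le_pow_right a.pos (by simp at this; omega)

theorem card_filter_edgeIndex_eq_le_of_interior (hℓ : 3 ≤ ℓ) (a b : Fin n) (e : Sym2 (Fin n))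
    {i : ℕ} (hi0 : 0 < i) (hi : i < ℓ - 2) :
    #{v ∈ walksContaining n ℓ a b {e} | edgeIndex ℓ (natExtend a v) e = i} ≤
      2 * n ^ (ℓ - 4) := by
  set F := {v ∈ walksContaining n ℓ a b {e} | edgeIndex ℓ (natExtend a v) e = i}
  have hmaps : ∀ v ∈ F, edgeSignature ℓ (natExtend a v) e ∈ ({i} : Finset ℕ) ×ˢ univ :=
    fun v hv => mem_product.2 ⟨mem_singleton.2 (mem_filter.1 hv).2, mem_univ _⟩
  have hcard : 4 ≤ #(coveredIndices ℓ {i}) := by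
    have : coveredIndices ℓ {i} = {i, i + 1, 0, ℓ - 1} := by
      ext; simp [coveredIndices]; omega
    rw [this, card_insert_of_notMem (by simp; omega), card_insert_of_notMem (by simp; omega),
      card_pair (by omega)]
  have hfiber : ∀ k ∈ ({i} : Finset ℕ) ×ˢ (univ : Finset Bool),
      #{v ∈ F | edgeSignature ℓ (natExtend a v) e = k} ≤ n ^ (ℓ - 4) := by
    intro k _
    have hagree : ∀ v ∈ {v ∈ F | edgeSignature ℓ (natExtend a v) e = k},
        ∀ w ∈ {v ∈ F | edgeSignature ℓ (natExtend a v) e = k},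
        ∀ j ∈ coveredIndices ℓ {i}, natExtend a v j = natExtend a w j := by
      intro v hv w hw j hj
      simp only [F, mem_filter, mem_walksContaining, singleton_subset_iff] at hv hw
      obtain ⟨⟨⟨hv0, hv1, hve⟩, hvi⟩, hvk⟩ := hv
      obtain ⟨⟨⟨hw0, hw1, hwe⟩, -⟩, hwk⟩ := hw
      refine eqOn_coveredIndices_of_edgeSignature_eq (hv0.trans hw0.symm) (hv1.trans hw1.symm)
        (singleton_subset_iff.2 hve) (singleton_subset_iff.2 hwe) ?_ ?_
      · intro e' he'
        rw [mem_singleton.1 he']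
        exact hvk.trans hwk.symm
      · rwa [image_singleton, hvi]
    refine (card_le_pow_of_forall_eq_on a _
      (coveredIndices_subset_range (by omega) (by simp; omega)) hagree).trans ?_
    simpa using Nat.pow_le_pow_right a.pos (by omega)
  calc #F ≤ n ^ (ℓ - 4) * #(({i} : Finset ℕ) ×ˢ (univ : Finset Bool)) :=
        card_le_mul_card_image_of_maps_to hmaps _ hfiber
    _ = 2 * n ^ (ℓ - 4) := by simp [mul_comm]

theorem card_walksContaining_singleton_le (hℓ : 3 ≤ ℓ) (a b : Fin n) (e : Sym2 (Fin n)) :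
    #(walksContaining n ℓ a b {e}) ≤ 2 * n ^ (ℓ - 3) + 2 * (ℓ - 3) * n ^ (ℓ - 4) := by
  have hmaps : ∀ v ∈ walksContaining n ℓ a b {e}, edgeIndex ℓ (natExtend a v) e ∈ range (ℓ - 1) :=
    fun v hv => mem_range.2 (edgeIndex_spec
      (singleton_subset_iff.1 (mem_walksContaining.1 hv).2.2)).1
  rw [card_eq_sum_card_fiberwise hmaps, show ℓ - 1 = ℓ - 3 + 1 + 1 by omega, sum_range_succ,
    sum_range_succ']
  have hinterior := sum_le_card_nsmul (range (ℓ - 3)) _ _ fun i hi =>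
    card_filter_edgeIndex_eq_le_of_interior hℓ a b e (i := i + 1) (by omega)
      (by have := mem_range.1 hi; omega)
  have hfirst := card_filter_edgeIndex_eq_le_of_end hℓ a b e (i := 0) (.inl rfl)
  have hlast := card_filter_edgeIndex_eq_le_of_end hℓ a b e (i := ℓ - 3 + 1) (.inr (by omega))
  simp only [card_range, smul_eq_mul] at hinterior
  nlinarith

end Counting

theorem deltaStar_le_sum {n ℓ : ℕ} {p : ℝ} (hp : 0 ≤ p) (f : Sym2 (Fin n))
    (EQ : Finset (Sym2 (Fin n))) :
    deltaStar n ℓ p f EQ ≤ ∑ r ∈ Ico 1 (ℓ - 1),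
      ((∑ I ∈ EQ.powersetCard r, #{A ∈ pathEdgeSets n ℓ f | I ⊆ A} : ℕ) : ℝ) * p ^ (ℓ - 1 - r) := by
  unfold deltaStar
  rw [← sum_fiberwise_of_maps_to (g := fun A => #(A ∩ EQ)) (t := Ico 1 (ℓ - 1))
    fun A hA => by simp only [mem_filter, mem_univ, true_and] at hA; exact mem_Ico.2 hA.2]
  gcongr with r hr
  rw [sum_congr rfl fun A hA => by rw [(mem_filter.1 hA).2], sum_const, nsmul_eq_mul]
  gcongr
  refine (card_le_card fun A hA => mem_biUnion.2 ⟨A ∩ EQ, ?_, ?_⟩).trans card_biUnion_le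
  · simp only [mem_filter] at hA
    exact mem_powersetCard.2 ⟨inter_subset_right, hA.2⟩
  · simp only [mem_filter, mem_univ, true_and] at hA
    exact mem_filter.2 ⟨by simpa [pathEdgeSets] using hA.1.1, inter_subset_left⟩

theorem sum_card_pathEdgeSets_le {n ℓ : ℕ} (hℓ : 0 < ℓ) {a b : Fin n}
    {EQ : Finset (Sym2 (Fin n))} (hEQ : #EQ ≤ ℓ - 1) (r B : ℕ)
    (hB : ∀ I : Finset (Sym2 (Fin n)), #I = r → #(walksContaining n ℓ a b I) ≤ B) :
    ∑ I ∈ EQ.powersetCard r, #{A ∈ pathEdgeSets n ℓ s(a, b) | I ⊆ A} ≤ (ℓ - 1).choose r * B :=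
  calc _ ≤ ∑ I ∈ EQ.powersetCard r, B := sum_le_sum fun I hI =>
        (card_filter_pathEdgeSets_le hℓ a b I).trans (hB I (mem_powersetCard.1 hI).2)
    _ ≤ (ℓ - 1).choose r * B := by
        rw [sum_const, card_powersetCard, smul_eq_mul]
        exact Nat.mul_le_mul_right _ (Nat.choose_le_choose _ hEQ)

theorem sum_card_pathEdgeSets_one_le {n ℓ : ℕ} (hℓ : 3 ≤ ℓ) (hn : 2 * (ℓ - 1) ≤ n)
    (a b : Fin n) {EQ : Finset (Sym2 (Fin n))} (hEQ : #EQ ≤ ℓ - 1) :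
    ∑ I ∈ EQ.powersetCard 1, #{A ∈ pathEdgeSets n ℓ s(a, b) | I ⊆ A} ≤
      (3 * ℓ - 5) * n ^ (ℓ - 3) := by
  have := sum_card_pathEdgeSets_le (by omega) hEQ 1 _ fun I hI => by
    obtain ⟨e, rfl⟩ := card_eq_one.1 hI
    exact card_walksContaining_singleton_le hℓ a b e
  rw [Nat.choose_one_right] at this
  refine this.trans ?_
  obtain ⟨m, rfl⟩ := Nat.exists_eq_add_of_le' hℓ
  rcases m with _ | k
  · simp
  · simp only [show k + 1 + 3 - 1 = k + 3 by omega, show k + 1 + 3 - 3 = k + 1 by omega,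
      show k + 1 + 3 - 4 = k by omega, show 3 * (k + 1 + 3) - 5 = 3 * k + 7 by omega, pow_succ]
      at hn ⊢
    have : 2 * (k + 3) * n ^ k ≤ n ^ k * n := by rw [mul_comm]; gcongr
    nlinarith

theorem sum_card_pathEdgeSets_le_pow {n ℓ r : ℕ} (hℓ : 2 ≤ ℓ) (hr : r ≤ ℓ - 2) (a b : Fin n)
    {EQ : Finset (Sym2 (Fin n))} (hEQ : #EQ ≤ ℓ - 1) :
    ∑ I ∈ EQ.powersetCard r, #{A ∈ pathEdgeSets n ℓ s(a, b) | I ⊆ A} ≤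
      2 ^ (ℓ - 1) * (2 * (ℓ - 1)) ^ (ℓ - 2) * n ^ (ℓ - 2 - r) := by
  refine (sum_card_pathEdgeSets_le (by omega) hEQ r ((2 * (ℓ - 1)) ^ r * n ^ (ℓ - 2 - r))
    fun I hI => hI ▸ card_walksContaining_le hℓ a b (hI ▸ hr)).trans ?_
  rw [← mul_assoc]
  exact Nat.mul_le_mul_right _ (Nat.mul_le_mul (Nat.choose_le_two_pow _ _)
    (Nat.pow_le_pow_right (by omega) hr))

theorem mul_pow_le_pow_mul_pow {x y C : ℝ} (hx : 0 ≤ x) (hy : 0 ≤ y) (hC : C ≤ x * y)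
    (hxy : 1 ≤ x * y) {ℓ r : ℕ} (h2 : 2 ≤ r) (hr : r ≤ ℓ - 2) :
    C * (x ^ (ℓ - 2 - r) * y ^ (ℓ - 1 - r)) ≤ x ^ (ℓ - 3) * y ^ (ℓ - 2) := by
  have hsplit : x ^ (ℓ - 3) * y ^ (ℓ - 2) =
      (x * y) ^ (r - 1) * (x ^ (ℓ - 2 - r) * y ^ (ℓ - 1 - r)) := by
    rw [show ℓ - 3 = (r - 1) + (ℓ - 2 - r) by omega, show ℓ - 2 = (r - 1) + (ℓ - 1 - r) by omega,
      pow_add, pow_add, mul_pow]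
    ring
  rw [hsplit]
  gcongr
  exact hC.trans (le_self_pow₀ hxy (by omega))

theorem sum_mul_pow_le_two_pow_mul_div {ℓ : ℕ} (hℓ : 3 ≤ ℓ) {x y C : ℝ} (hx : 0 < x) (hy : 0 < y)
    (hC : C ≤ x * y) (hC1 : 1 ≤ C) (N : ℕ → ℝ) (h1 : N 1 ≤ (3 * ℓ - 5 : ℕ) * x ^ (ℓ - 3))
    (hr : ∀ r ∈ Ico 2 (ℓ - 1), N r ≤ C * x ^ (ℓ - 2 - r)) :
    ∑ r ∈ Ico 1 (ℓ - 1), N r * y ^ (ℓ - 1 - r) ≤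
      2 ^ (ℓ - 1) * x ^ (ℓ - 2) * y ^ (ℓ - 1) / (x * y) := by
  set U := x ^ (ℓ - 3) * y ^ (ℓ - 2) with hUdef
  have hU : 0 ≤ U := by positivity
  have hfirst : N 1 * y ^ (ℓ - 1 - 1) ≤ (3 * ℓ - 5 : ℕ) * U := by
    rw [show ℓ - 1 - 1 = ℓ - 2 by omega, hUdef, ← mul_assoc]
    exact mul_le_mul_of_nonneg_right h1 (by positivity)
  have hrest : ∑ r ∈ Ico 2 (ℓ - 1), N r * y ^ (ℓ - 1 - r) ≤ (ℓ - 3 : ℕ) * U := by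
    refine (sum_le_card_nsmul _ _ U fun r hr' => ?_).trans
      (by rw [Nat.card_Ico, nsmul_eq_mul, show ℓ - 1 - 2 = ℓ - 3 by omega])
    have := mem_Ico.1 hr'
    calc N r * y ^ (ℓ - 1 - r) ≤ C * x ^ (ℓ - 2 - r) * y ^ (ℓ - 1 - r) := by
          gcongr; exact hr r hr'
      _ ≤ U := by
          rw [mul_assoc]
          exact mul_pow_le_pow_mul_pow hx.le hy.le hC (hC1.trans hC) (by omega) (by omega)
  have hrhs : 2 ^ (ℓ - 1) * x ^ (ℓ - 2) * y ^ (ℓ - 1) / (x * y) = 2 ^ (ℓ - 1) * U := by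
    have ex : x ^ (ℓ - 2) = x ^ (ℓ - 3) * x := by rw [← pow_succ]; congr 1; omega
    have ey : y ^ (ℓ - 1) = y ^ (ℓ - 2) * y := by rw [← pow_succ]; congr 1; omega
    rw [hUdef, ex, ey]
    field_simp
  have hpow : ((3 * ℓ - 5 : ℕ) : ℝ) + (ℓ - 3 : ℕ) ≤ 2 ^ (ℓ - 1) := by
    obtain ⟨m, rfl⟩ := Nat.exists_eq_add_of_le' hℓ
    have : m < 2 ^ m := Nat.lt_two_pow_self
    rw [show m + 3 - 1 = m + 2 by omega, pow_add]
    push_cast [show 3 * (m + 3) - 5 = 3 * m + 4 by omega, show m + 3 - 3 = m by omega]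
    have : (m : ℝ) + 1 ≤ 2 ^ m := by exact_mod_cast this
    linarith
  rw [sum_eq_sum_Ico_succ_bot (by omega), hrhs]
  nlinarith

theorem eventually_le_mul_of_isLittleO_rpow {p : ℕ → ℝ} {a : ℝ} (ha : 0 < a)
    (hp : ∀ n, 0 < p n) (h : (fun n : ℕ => (n : ℝ) ^ a) =o[atTop] fun n => p n * n) (C : ℝ) :
    ∀ᶠ n in atTop, C ≤ p n * n := by
  have hnorm : Tendsto (fun n : ℕ => ‖(n : ℝ) ^ a‖) atTop atTop :=
    ((tendsto_rpow_atTop ha).comp tendsto_natCast_atTop_atTop).congr fun n =>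
      (Real.norm_of_nonneg (Real.rpow_nonneg n.cast_nonneg a)).symm
  filter_upwards [(h.isBigO.trans_tendsto_norm_atTop hnorm).eventually_ge_atTop C] with n hn
  rwa [Real.norm_of_nonneg (mul_nonneg (hp n).le n.cast_nonneg)] at hn

/-- Fix `ℓ > 2` and `p = p(n)` with `pn = ω(n^{1/(ℓ-1)})`.  For every path `Q`
with `ℓ` vertices in `K_n` and endpoint pair `f`, we have
`Δ* ≤ 2^{ℓ-1} n^{ℓ-2} p^{ℓ-1} / (np)` (for `n` large). -/
theorem stmt_10 (ℓ : ℕ) (hℓ : 2 < ℓ) (p : ℕ → ℝ)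
    (hp : ∀ n, 0 < p n ∧ p n ≤ 1)
    (hω : Asymptotics.IsLittleO Filter.atTop
      (fun n : ℕ => ((n : ℝ)) ^ ((1 : ℝ) / ((ℓ : ℝ) - 1))) (fun n : ℕ => p n * n)) :
    ∀ᶠ n in Filter.atTop, ∀ (wq : ℕ → Fin n) (f : Sym2 (Fin n)),
      isPathCopy n ℓ f wq →
      deltaStar n ℓ (p n) f (pathEdges n ℓ wq) ≤
        2 ^ (ℓ - 1) * (n : ℝ) ^ (ℓ - 2) * (p n) ^ (ℓ - 1) / ((n : ℝ) * p n) := by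
  have hexp : (0 : ℝ) < 1 / ((ℓ : ℝ) - 1) :=
    one_div_pos.2 (sub_pos.2 (by exact_mod_cast (by omega : 1 < ℓ)))
  set C : ℕ := 2 ^ (ℓ - 1) * (2 * (ℓ - 1)) ^ (ℓ - 2)
  filter_upwards [eventually_le_mul_of_isLittleO_rpow hexp (fun n => (hp n).1) hω C,
    eventually_ge_atTop (2 * (ℓ - 1))] with n hnp hn wq f hQ
  rw [← hQ.2]
  have hEQ : #(pathEdges n ℓ wq) ≤ ℓ - 1 := card_image_le.trans (card_range _).le
  have hn0 : (0 : ℝ) < n := by exact_mod_cast (by omega : 0 < n)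
  have hC1 : (1 : ℝ) ≤ C := by
    exact_mod_cast Nat.mul_pos (Nat.two_pow_pos _) (Nat.pow_pos (by omega))
  refine (deltaStar_le_sum (hp n).1.le _ _).trans (sum_mul_pow_le_two_pow_mul_div hℓ hn0 (hp n).1
    (by rwa [mul_comm]) hC1 _ ?_ fun r hr => ?_)
  · exact_mod_cast sum_card_pathEdgeSets_one_le hℓ hn _ _ hEQ
  · have := mem_Ico.1 hr
    exact_mod_cast sum_card_pathEdgeSets_le_pow (by omega) (by omega) _ _ hEQ
end

section
/- Let G be a bipartite graph with parts A and B, |A| ≤ n, |B| ≤ n, e(G) ≥ γ·pn|A|, and suppose e(G') ≤ (1+ε)p|A||B'| for every B' ⊆ B (with (1+ε)(5γ/8) + γ/4 < γ, e.g. ε ≤ γ/10 and γ ≤ 1/4 suffices when |A| ≤ n). Then the set B* of vertices b ∈ B with deg_G(b) ≥ (γ/4)p|A| satisfies |B*| ≥ (5γ/8)n. -/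
open scoped Classical

lemma card_prod_filter_eq_sum {α β : Type*} (A : Finset α) (B : Finset β)
    (E : α → β → Prop) [DecidablePred fun q : α × β => E q.1 q.2]
    [∀ b, DecidablePred fun a => E a b] :
    ((A ×ˢ B).filter (fun q => E q.1 q.2)).card
      = ∑ b ∈ B, (A.filter (fun a => E a b)).card := by
  rw [Finset.card_eq_sum_card_fiberwise
    (f := Prod.snd) (t := B)
    (fun x hx => (Finset.mem_product.mp (Finset.mem_filter.mp hx).1).2)]
  refine Finset.sum_congr rfl fun b hb => ?_
  refine Finset.card_bij (fun q _ => q.1) ?_ ?_ ?_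
  · intro q hq
    simp only [Finset.mem_filter, Finset.mem_product] at hq
    exact Finset.mem_filter.mpr ⟨hq.1.1.1, hq.2 ▸ hq.1.2⟩
  · rintro ⟨a1, b1⟩ h1 ⟨a2, b2⟩ h2 h
    simp only [Finset.mem_filter] at h1 h2
    simp_all [Prod.ext_iff]
  · intro a ha
    simp only [Finset.mem_filter] at ha
    exact ⟨(a, b), by simp [Finset.mem_filter, Finset.mem_product, ha.1, ha.2, hb], rfl⟩

/-- Degree-concentration step: let `G` be a bipartite graph with parts `A`, `B`
of sizes at most `n`, with `e(G) ≥ γpn|A|`, whose edge counts into subsets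
`B' ⊆ B` obey the upper-uniformity bound `e(A,B') ≤ (1+ε)p|A||B'|`.  Then the
set of vertices `b ∈ B` with `deg(b) ≥ (γ/4)p|A|` has size at least
`(5γ/8)n`. -/
theorem stmt_14 {α β : Type*} (A : Finset α) (B : Finset β) (E : α → β → Prop)
    (n : ℕ) (γ ε p : ℝ) (hγ : 0 < γ) (hγ4 : γ ≤ 1 / 4) (hε : 0 < ε)
    (hε10 : ε ≤ γ / 10) (hp : 0 < p) (hA : 0 < A.card)
    (hAn : (A.card : ℝ) ≤ n) (hBn : (B.card : ℝ) ≤ n)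
    (hE : γ * p * n * A.card ≤ (((A ×ˢ B).filter (fun q => E q.1 q.2)).card : ℝ))
    (hupper : ∀ B' ⊆ B,
      (((A ×ˢ B').filter (fun q => E q.1 q.2)).card : ℝ) ≤ (1 + ε) * p * A.card * B'.card) :
    (5 * γ / 8) * n ≤
      ((B.filter (fun b =>
        (γ / 4) * p * A.card ≤ ((A.filter (fun a => E a b)).card : ℝ))).card : ℝ) := by
  set Bs := B.filter (fun b =>
    (γ / 4) * p * A.card ≤ ((A.filter (fun a => E a b)).card : ℝ)) with hBs
  have hsplit : (((A ×ˢ B).filter (fun q => E q.1 q.2)).card : ℝ)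
      = ∑ b ∈ Bs, ((A.filter (fun a => E a b)).card : ℝ)
        + ∑ b ∈ B \ Bs, ((A.filter (fun a => E a b)).card : ℝ) := by
    have hnat : ((A ×ˢ B).filter (fun q => E q.1 q.2)).card
        = ∑ b ∈ Bs, (A.filter (fun a => E a b)).card
          + ∑ b ∈ B \ Bs, (A.filter (fun a => E a b)).card := by
      rw [card_prod_filter_eq_sum A B E,
        ← Finset.sum_union (Finset.disjoint_sdiff)]
      congr 1
      exact (Finset.union_sdiff_of_subset (Finset.filter_subset _ _)).symm
    push_cast [hnat]
    ring
  have h1 : ∑ b ∈ Bs, ((A.filter (fun a => E a b)).card : ℝ)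
      ≤ (1 + ε) * p * A.card * Bs.card := by
    have h := hupper Bs (Finset.filter_subset _ _)
    have hnat : ((A ×ˢ Bs).filter (fun q => E q.1 q.2)).card
        = ∑ b ∈ Bs, (A.filter (fun a => E a b)).card :=
      card_prod_filter_eq_sum A Bs E
    rw [hnat] at h
    push_cast at h ⊢
    exact h
  have h2 : ∑ b ∈ B \ Bs, ((A.filter (fun a => E a b)).card : ℝ)
      ≤ (B \ Bs).card * ((γ / 4) * p * A.card) := by
    calc ∑ b ∈ B \ Bs, ((A.filter (fun a => E a b)).card : ℝ)
        ≤ ∑ _b ∈ B \ Bs, ((γ / 4) * p * A.card) := by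
          refine Finset.sum_le_sum fun b hb => ?_
          have hb' := Finset.mem_sdiff.mp hb
          have : ¬ ((γ / 4) * p * A.card ≤ ((A.filter (fun a => E a b)).card : ℝ)) := by
            intro h
            exact hb'.2 (Finset.mem_filter.mpr ⟨hb'.1, h⟩)
          linarith [not_le.mp this]
      _ = (B \ Bs).card * ((γ / 4) * p * A.card) := by
          rw [Finset.sum_const, nsmul_eq_mul]
  have hsd : ((B \ Bs).card : ℝ) ≤ n := by
    have := Finset.card_le_card (Finset.sdiff_subset (s := B) (t := Bs))
    exact le_trans (by exact_mod_cast this) hBn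
  have hAc : (0:ℝ) < A.card := by exact_mod_cast hA
  have hn : (0:ℝ) < n := lt_of_lt_of_le hAc hAn
  have hBsnn : (0:ℝ) ≤ Bs.card := Nat.cast_nonneg _
  have key : γ * p * n * A.card ≤ (1 + ε) * p * A.card * Bs.card
      + n * ((γ / 4) * p * A.card) := by
    have := hE
    rw [hsplit] at this
    nlinarith [mul_nonneg (mul_nonneg (by linarith : (0:ℝ) ≤ γ/4) hp.le) hAc.le]
  -- derive the bound
  have hpa : (0:ℝ) < p * A.card := mul_pos hp hAc
  nlinarith [mul_pos hpa hn, mul_nonneg hpa.le hBsnn, mul_pos hγ hn]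
end
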